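/- Let (A,C,ψ) be an entwining structure. On the precosimplicial module I^•(A,C,ψ) with coface maps δ_i and the cyclic operator (τ_n g)(c ⊗ a₁ ⊗ ... ⊗ a_{n+1}) = (-1)^n g(c^ψ ⊗ a₂ ⊗ ... ⊗ a_{n+1} ⊗ a_{1ψ}), the identity δ_i τ_{n-1} = -τ_n δ_{i-1} holds for all 1 ≤ i ≤ n. -/
import Mathlib


open TensorProduct

/-- An entwining structure `(A, C, ψ)` over a field `k`: a unital `k`-algebra `A`,
a counital `k`-coalgebra `C` and a `k`-linear map `ψ : C ⊗ A → A ⊗ C` satisfying the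
entwining axioms of Brzeziński–Majid. -/
structure Entwining (k A C : Type) [Field k] [Ring A] [Algebra k A]
    [AddCommGroup C] [Module k C] [Coalgebra k C] : Type where
  ψ : C ⊗[k] A →ₗ[k] A ⊗[k] C
  mul_compat : ψ ∘ₗ TensorProduct.map (LinearMap.id : C →ₗ[k] C) (LinearMap.mul' k A) =
    TensorProduct.map (LinearMap.mul' k A) (LinearMap.id : C →ₗ[k] C)
      ∘ₗ (TensorProduct.assoc k A A C).symm.toLinearMap
      ∘ₗ TensorProduct.map (LinearMap.id : A →ₗ[k] A) ψ
      ∘ₗ (TensorProduct.assoc k A C A).toLinearMap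
      ∘ₗ TensorProduct.map ψ (LinearMap.id : A →ₗ[k] A)
      ∘ₗ (TensorProduct.assoc k C A A).symm.toLinearMap
  comul_compat : TensorProduct.map (LinearMap.id : A →ₗ[k] A)
        (CoalgebraStruct.comul (R := k) (A := C)) ∘ₗ ψ =
    (TensorProduct.assoc k A C C).toLinearMap
      ∘ₗ TensorProduct.map ψ (LinearMap.id : C →ₗ[k] C)
      ∘ₗ (TensorProduct.assoc k C A C).symm.toLinearMap
      ∘ₗ TensorProduct.map (LinearMap.id : C →ₗ[k] C) ψ
      ∘ₗ (TensorProduct.assoc k C C A).toLinearMap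
      ∘ₗ TensorProduct.map (CoalgebraStruct.comul (R := k) (A := C)) (LinearMap.id : A →ₗ[k] A)
  counit_compat : (TensorProduct.rid k A).toLinearMap
      ∘ₗ TensorProduct.map (LinearMap.id : A →ₗ[k] A)
        (CoalgebraStruct.counit (R := k) (A := C)) ∘ₗ ψ =
    (TensorProduct.lid k A).toLinearMap
      ∘ₗ TensorProduct.map (CoalgebraStruct.counit (R := k) (A := C)) (LinearMap.id : A →ₗ[k] A)
  unit_compat : ∀ c : C, ψ (c ⊗ₜ[k] (1 : A)) = (1 : A) ⊗ₜ[k] c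

variable {k A C : Type}

/-- `IterRep e m c v ι γ β` says that `Σ_{s : ι} (β s) ⊗ (γ s)` is a representation of
the `m`-fold iterated entwining `c^{ψ^m} ⊗ v_{1ψ} ⊗ ⋯ ⊗ v_{mψ}`, obtained by applying
`ψ` successively: first to `(c, v 0)`, then to the resulting coalgebra elements and
`v 1`, and so on. -/
inductive IterRep [Field k] [Ring A] [Algebra k A] [AddCommGroup C] [Module k C]
    [Coalgebra k C] (e : Entwining k A C) :
    (m : ℕ) → C → (Fin m → A) → (ι : Type) → (ι → C) → (ι → (Fin m → A)) → Prop
  | zero (c : C) :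
      IterRep e 0 c Fin.elim0 PUnit (fun _ => c) (fun _ => Fin.elim0)
  | succ {m : ℕ} (c : C) (v : Fin (m + 1) → A) (ι₀ : Type) [Fintype ι₀]
      (α : ι₀ → A) (γ₀ : ι₀ → C)
      (h : e.ψ (c ⊗ₜ[k] v 0) = ∑ i, α i ⊗ₜ[k] γ₀ i)
      (κ : ι₀ → Type) (γ : (i : ι₀) → κ i → C) (β : (i : ι₀) → κ i → (Fin m → A))
      (hs : ∀ i : ι₀, IterRep e m (γ₀ i) (fun j => v j.succ) (κ i) (γ i) (β i)) :
      IterRep e (m + 1) c v ((i : ι₀) × κ i) (fun p => γ p.1 p.2)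
        (fun p => Fin.cons (α p.1) (β p.1 p.2))

/-- `g ∈ ℐ^{m-1}(A,C,ψ)`: the functional `g : C ⊗ A^{⊗m} → k` is invariant, i.e.
`g(c ⊗ a₁ ⊗ ⋯ ⊗ a_m) = g(c^{ψ^m} ⊗ a_{1ψ} ⊗ ⋯ ⊗ a_{mψ})`, stated via arbitrary
representations of the iterated entwining. -/
def EntwInvariant [Field k] [Ring A] [Algebra k A] [AddCommGroup C] [Module k C]
    [Coalgebra k C] (e : Entwining k A C) {m : ℕ}
    (g : C →ₗ[k] MultilinearMap k (fun _ : Fin m => A) k) : Prop :=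
  ∀ (c : C) (v : Fin m → A) (ι : Type) [Fintype ι] (γ : ι → C) (β : ι → (Fin m → A)),
    IterRep e m c v ι γ β → g c v = ∑ s, g (γ s) (β s)

/-- `TauRel e g tg` says that `tg = τ_m g` is the cyclic operator applied to `g`:
`(τ_m g)(c ⊗ a₁ ⊗ ⋯ ⊗ a_{m+1}) = (-1)^m g(c^ψ ⊗ a₂ ⊗ ⋯ ⊗ a_{m+1} ⊗ a_{1ψ})`, stated
via arbitrary representations `ψ(c ⊗ a₁) = Σ αᵢ ⊗ γᵢ`. -/
def TauRel [Field k] [Ring A] [Algebra k A] [AddCommGroup C] [Module k C] [Coalgebra k C]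
    (e : Entwining k A C) {m : ℕ}
    (g tg : C →ₗ[k] MultilinearMap k (fun _ : Fin (m + 1) => A) k) : Prop :=
  ∀ (c : C) (v : Fin (m + 1) → A) (t : ℕ) (α : Fin t → A) (γ : Fin t → C),
    e.ψ (c ⊗ₜ[k] v 0) = ∑ i, α i ⊗ₜ[k] γ i →
    tg c v = (-1 : k) ^ m *
      ∑ i, g (γ i) (Function.update (fun j : Fin (m + 1) => v (j + 1)) (Fin.last m) (α i))

/-- The vector `(a₁, …, aᵢaᵢ₊₁, …, a_{n+2})` obtained by multiplying the adjacent
entries at positions `i, i+1` (0-indexed). -/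
def mergeVec {A : Type} [Mul A] {n : ℕ} (v : Fin (n + 2) → A) (i : Fin (n + 1)) :
    Fin (n + 1) → A :=
  fun j => if j.castSucc < i.castSucc then v j.castSucc
    else if j = i then v i.castSucc * v i.succ else v j.succ

/-- `CofaceRel e i g dg` says that `dg = δᵢ g` is the `i`-th coface of the functional
`g : C ⊗ A^{⊗(m+1)} → k`:
`(δ₀ g)(c, a₁, …, a_{m+2}) = g(c^ψ, a₂, …, a_{m+2}a_{1ψ})` (via arbitrary
representations of `ψ(c ⊗ a₁)`) and
`(δᵢ g)(c, a₁, …, a_{m+2}) = g(c, a₁, …, aᵢaᵢ₊₁, …, a_{m+2})` for `i ≥ 1`. -/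
def CofaceRel [Field k] [Ring A] [Algebra k A] [AddCommGroup C] [Module k C]
    [Coalgebra k C] (e : Entwining k A C) {m : ℕ} (i : Fin (m + 2))
    (g : C →ₗ[k] MultilinearMap k (fun _ : Fin (m + 1) => A) k)
    (dg : C →ₗ[k] MultilinearMap k (fun _ : Fin (m + 2) => A) k) : Prop :=
  if h : i = 0 then
    ∀ (c : C) (v : Fin (m + 2) → A) (t : ℕ) (α : Fin t → A) (γ : Fin t → C),
      e.ψ (c ⊗ₜ[k] v 0) = ∑ s, α s ⊗ₜ[k] γ s →
      dg c v = ∑ s, g (γ s) (Function.update (fun j : Fin (m + 1) => v j.succ)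
        (Fin.last m) (v (Fin.last (m + 1)) * α s))
  else
    ∀ (c : C) (v : Fin (m + 2) → A), dg c v = g c (mergeVec v (i.pred h))


section Aux

lemma exists_fin_rep {k M N : Type} [CommSemiring k] [AddCommMonoid M] [AddCommMonoid N]
    [Module k M] [Module k N] (x : M ⊗[k] N) :
    ∃ (t : ℕ) (α : Fin t → M) (γ : Fin t → N), x = ∑ s, α s ⊗ₜ[k] γ s := by
  obtain ⟨S, hS⟩ := TensorProduct.exists_finset x
  refine ⟨S.card, fun s => (S.equivFin.symm s).1.1, fun s => (S.equivFin.symm s).1.2, ?_⟩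
  rw [hS, ← Finset.sum_attach S (fun i => i.1 ⊗ₜ[k] i.2)]
  exact Fintype.sum_equiv S.equivFin _ _ (fun s => by simp)

variable [Field k] [Ring A] [Algebra k A] [AddCommGroup C] [Module k C] [Coalgebra k C]

/-- The linear map `a ⊗ c ↦ g c (u with last entry replaced by a)`. -/
noncomputable def Phi {m : ℕ} (g : C →ₗ[k] MultilinearMap k (fun _ : Fin (m + 1) => A) k)
    (u : Fin (m + 1) → A) : A ⊗[k] C →ₗ[k] k :=
  TensorProduct.lift (LinearMap.mk₂ k
    (fun a c => g c (Function.update u (Fin.last m) a))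
    (fun a b c => (g c).map_update_add u (Fin.last m) a b)
    (fun r a c => (g c).map_update_smul u (Fin.last m) r a)
    (fun a c c' => by simp only [map_add, MultilinearMap.add_apply])
    (fun r a c => by simp only [map_smul, MultilinearMap.smul_apply, smul_eq_mul]))

@[simp] lemma Phi_tmul {m : ℕ} (g : C →ₗ[k] MultilinearMap k (fun _ : Fin (m + 1) => A) k)
    (u : Fin (m + 1) → A) (a : A) (c : C) :
    Phi g u (a ⊗ₜ[k] c) = g c (Function.update u (Fin.last m) a) := rfl

lemma Phi_congr {m : ℕ} (g : C →ₗ[k] MultilinearMap k (fun _ : Fin (m + 1) => A) k)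
    {u u' : Fin (m + 1) → A} (h : ∀ j, j ≠ Fin.last m → u j = u' j) :
    Phi g u = Phi g u' := by
  apply TensorProduct.ext'
  intro a c
  rw [Phi_tmul, Phi_tmul]
  congr 1
  funext j
  rcases eq_or_ne j (Fin.last m) with hj | hj
  · subst hj; simp
  · rw [Function.update_of_ne hj, Function.update_of_ne hj, h j hj]

lemma Phi_rep {m : ℕ} (g : C →ₗ[k] MultilinearMap k (fun _ : Fin (m + 1) => A) k)
    (u : Fin (m + 1) → A) {x : A ⊗[k] C} {t : ℕ} {α : Fin t → A} {γ : Fin t → C}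
    (h : x = ∑ s, α s ⊗ₜ[k] γ s) :
    Phi g u x = ∑ s, g (γ s) (Function.update u (Fin.last m) (α s)) := by
  rw [h, map_sum]; simp

variable (e : Entwining k A C)

/-- Reformulation of `TauRel` via `Phi`. -/
lemma tauRel_eq {m : ℕ} {g tg : C →ₗ[k] MultilinearMap k (fun _ : Fin (m + 1) => A) k}
    (htg : TauRel e g tg) (c : C) (v : Fin (m + 1) → A) :
    tg c v = (-1 : k) ^ m * Phi g (fun j => v (j + 1)) (e.ψ (c ⊗ₜ[k] v 0)) := by
  obtain ⟨t, α, γ, h⟩ := exists_fin_rep (e.ψ (c ⊗ₜ[k] v 0))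
  rw [htg c v t α γ h, Phi_rep g _ h]

/-- Reformulation of the `δ₀` coface relation via `Phi`. -/
lemma coface0_eq {m : ℕ} {g : C →ₗ[k] MultilinearMap k (fun _ : Fin (m + 1) => A) k}
    {dg : C →ₗ[k] MultilinearMap k (fun _ : Fin (m + 2) => A) k}
    (hdg : CofaceRel e 0 g dg) (c : C) (v : Fin (m + 2) → A) :
    dg c v = Phi g (fun j => v j.succ)
      ((TensorProduct.map (LinearMap.mulLeft k (v (Fin.last (m + 1)))) LinearMap.id)
        (e.ψ (c ⊗ₜ[k] v 0))) := by
  rw [CofaceRel, dif_pos rfl] at hdg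
  obtain ⟨t, α, γ, h⟩ := exists_fin_rep (e.ψ (c ⊗ₜ[k] v 0))
  have h2 : (TensorProduct.map (LinearMap.mulLeft k (v (Fin.last (m + 1)))) LinearMap.id)
      (e.ψ (c ⊗ₜ[k] v 0)) = ∑ s, (v (Fin.last (m + 1)) * α s) ⊗ₜ[k] γ s := by
    rw [h, map_sum]; simp [LinearMap.mulLeft_apply]
  rw [hdg c v t α γ h, Phi_rep g _ h2]

lemma mulLeft_map {a : A} (y : A ⊗[k] C) :
    (TensorProduct.map (LinearMap.mul' k A) LinearMap.id)
      ((TensorProduct.assoc k A A C).symm (a ⊗ₜ[k] y))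
    = (TensorProduct.map (LinearMap.mulLeft k a) LinearMap.id) y := by
  induction y using TensorProduct.induction_on with
  | zero => simp
  | tmul b c => simp [LinearMap.mulLeft_apply]
  | add y z hy hz => simp [tmul_add, map_add, hy, hz]

/-- Iterated form of the multiplicativity axiom. -/
lemma psi_mul_rep (c : C) (a b : A) {t : ℕ} {α : Fin t → A} {γ : Fin t → C}
    (h : e.ψ (c ⊗ₜ[k] a) = ∑ s, α s ⊗ₜ[k] γ s) :
    e.ψ (c ⊗ₜ[k] (a * b)) = ∑ s,
      (TensorProduct.map (LinearMap.mulLeft k (α s)) LinearMap.id) (e.ψ (γ s ⊗ₜ[k] b)) := by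
  have := congrArg (fun f : C ⊗[k] (A ⊗[k] A) →ₗ[k] A ⊗[k] C => f (c ⊗ₜ[k] (a ⊗ₜ[k] b)))
    e.mul_compat
  simp only [LinearMap.coe_comp, Function.comp_apply, LinearEquiv.coe_coe,
    TensorProduct.map_tmul, LinearMap.id_coe, id_eq, LinearMap.mul'_apply,
    TensorProduct.assoc_symm_tmul, TensorProduct.assoc_tmul] at this
  rw [this, h, TensorProduct.sum_tmul, map_sum, map_sum, map_sum, map_sum]
  refine Finset.sum_congr rfl (fun s _ => ?_)
  simp only [TensorProduct.assoc_tmul, TensorProduct.map_tmul, LinearMap.id_coe, id_eq]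
  exact mulLeft_map _

end Aux


section Merge

variable {A : Type} [Ring A] {N : ℕ}

lemma mergeVec_zero_zero (v : Fin (N + 2) → A) :
    mergeVec v (0 : Fin (N + 1)) 0 = v 0 * v 1 := by
  simp [mergeVec]

lemma mergeVec_apply_zero (v : Fin (N + 2) → A) (i : Fin (N + 1)) (h : i ≠ 0) :
    mergeVec v i 0 = v 0 := by
  have h1 : (0 : Fin (N + 2)) < i.castSucc := by
    simp only [Fin.lt_def, Fin.val_zero]
    exact Nat.pos_of_ne_zero (fun hh => h (Fin.ext hh))
  simp [mergeVec, h1]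

lemma case0_vec (v : Fin (N + 2) → A) (a : A) (j : Fin (N + 1)) (h : j ≠ Fin.last N) :
    Function.update (fun q : Fin (N + 2) => v (q + 1)) (Fin.last (N + 1)) a j.succ
      = mergeVec v 0 (j + 1) := by
  have hj : (j : ℕ) < N := Fin.val_lt_last h
  simp only [mergeVec, Function.update_apply, Fin.ext_iff, Fin.lt_def, Fin.coe_castSucc,
    Fin.val_succ, Fin.val_last, Fin.val_add_one, Fin.val_zero]
  split_ifs <;> first
    | omega
    | exact False.elim (by assumption)
    | (refine congrArg v (Fin.ext ?_);
       simp only [Fin.val_add_one, Fin.val_succ, Fin.coe_castSucc, Fin.val_last, Fin.ext_iff,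
         Fin.val_zero];
       split_ifs <;> omega)

lemma mergeVec_update (v : Fin (N + 2) → A) (i : Fin (N + 1)) (p : Fin (N + 1))
    (hp : (p : ℕ) + 1 = (i : ℕ)) (a : A) :
    mergeVec (Function.update (fun q : Fin (N + 2) => v (q + 1)) (Fin.last (N + 1)) a) p
      = Function.update (fun j : Fin (N + 1) => mergeVec v i (j + 1)) (Fin.last N) a := by
  funext j
  have hi := i.isLt
  have hjl := j.isLt
  have hpl : (p : ℕ) < N := by omega
  simp only [mergeVec, Function.update_apply, Fin.ext_iff, Fin.lt_def, Fin.coe_castSucc,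
    Fin.val_succ, Fin.val_last, Fin.val_add_one, Fin.val_zero]
  split_ifs <;> first
    | rfl
    | omega
    | exact False.elim (by assumption)
    | (refine congrArg v (Fin.ext ?_);
       simp only [Fin.val_add_one, Fin.val_succ, Fin.coe_castSucc, Fin.val_last, Fin.ext_iff,
         Fin.val_zero];
       split_ifs <;> omega)
    | (refine congrArg₂ (· * ·) (congrArg v (Fin.ext ?_)) (congrArg v (Fin.ext ?_)) <;>
       simp only [Fin.val_add_one, Fin.val_succ, Fin.coe_castSucc, Fin.val_last, Fin.ext_iff,
         Fin.val_zero] <;>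
       split_ifs <;> omega)

end Merge

/-- On the cocyclic module `ℐ^•(A,C,ψ)`, the identity
`δᵢ ∘ τ_{n-1} = - τ_n ∘ δ_{i-1}` holds for `1 ≤ i ≤ n`. Here `n = N + 1` and the index
`i : Fin (N+1)` represents the paper's index `i + 1 ∈ {1, …, n}`. -/
theorem coface_cyclic_compat
    [Field k] [Ring A] [Algebra k A] [AddCommGroup C] [Module k C] [Coalgebra k C]
    (e : Entwining k A C) (N : ℕ) (i : Fin (N + 1))
    (g tg : C →ₗ[k] MultilinearMap k (fun _ : Fin (N + 1) => A) k)
    (dtg dg tdg : C →ₗ[k] MultilinearMap k (fun _ : Fin (N + 2) => A) k)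
    (hg : EntwInvariant e g)
    (htg : TauRel e g tg)                -- tg  = τ_{n-1} g
    (hdtg : CofaceRel e i.succ tg dtg)   -- dtg = δ_i (τ_{n-1} g)
    (hdg : CofaceRel e i.castSucc g dg)  -- dg  = δ_{i-1} g
    (htdg : TauRel e dg tdg) :           -- tdg = τ_n (δ_{i-1} g)
    ∀ (c : C) (v : Fin (N + 2) → A), dtg c v = - tdg c v := by
  intro c v
  have hs : i.succ ≠ 0 := Fin.succ_ne_zero i
  unfold CofaceRel at hdtg hdg
  rw [dif_neg hs] at hdtg
  rw [hdtg c v, Fin.pred_succ]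
  rcases eq_or_ne i 0 with hi | hi
  · -- case i = 0
    subst hi
    rw [Fin.castSucc_zero, dif_pos rfl] at hdg
    have hdg' : CofaceRel e 0 g dg := by rw [CofaceRel, dif_pos rfl]; exact hdg
    obtain ⟨t, α, γ, hrep⟩ := exists_fin_rep (e.ψ (c ⊗ₜ[k] v 0))
    rw [tauRel_eq e htg c (mergeVec v 0), mergeVec_zero_zero v,
        psi_mul_rep e c (v 0) (v 1) hrep, map_sum]
    rw [tauRel_eq e htdg c v, Phi_rep dg _ hrep]
    have key : ∀ s, dg (γ s)
        (Function.update (fun j : Fin (N + 2) => v (j + 1)) (Fin.last (N + 1)) (α s))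
        = Phi g (fun j => mergeVec v 0 (j + 1))
            ((TensorProduct.map (LinearMap.mulLeft k (α s)) LinearMap.id)
              (e.ψ ((γ s) ⊗ₜ[k] v 1))) := by
      intro s
      rw [coface0_eq e hdg']
      have e1 : Function.update (fun j : Fin (N + 2) => v (j + 1)) (Fin.last (N + 1)) (α s)
          (Fin.last (N + 1)) = α s := Function.update_self _ _ _
      have e2 : Function.update (fun j : Fin (N + 2) => v (j + 1)) (Fin.last (N + 1)) (α s)
          0 = v 1 := by
        rw [Function.update_of_ne (by simp [Fin.ext_iff])]
        norm_num
      rw [e1, e2,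
        Phi_congr g (u' := fun j => mergeVec v 0 (j + 1)) (fun j hj => case0_vec v (α s) j hj)]
    rw [Finset.sum_congr rfl (fun s _ => key s), pow_succ]
    ring
  · -- case i ≠ 0
    have hc : i.castSucc ≠ 0 := Fin.castSucc_ne_zero_iff.mpr hi
    rw [dif_neg hc] at hdg
    rw [tauRel_eq e htg c (mergeVec v i), mergeVec_apply_zero v i hi]
    rw [tauRel_eq e htdg c v]
    have hPhi : Phi dg (fun j => v (j + 1)) = Phi g (fun j => mergeVec v i (j + 1)) := by
      apply TensorProduct.ext'
      intro a c'
      rw [Phi_tmul, Phi_tmul, hdg,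
        mergeVec_update v i (i.castSucc.pred hc)
          (by simp only [Fin.coe_pred, Fin.coe_castSucc]
              have : (i : ℕ) ≠ 0 := fun hh => hi (Fin.ext hh)
              omega) a]
    rw [hPhi, pow_succ]
    ring
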